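/- (Subtractive dithering.) Let Δ > 0, let uni_Δ: ℝ → ℝ be the uniform quantizer uni_Δ(y) = Δ·⌊y/Δ + 1/2⌋ (rounding to the nearest multiple of Δ), let X be a real-valued random variable, and let u be uniformly distributed on [−Δ/2, Δ/2) and independent of X. Then the quantization error ε := uni_Δ(X + u) − (X + u) is uniformly distributed on an interval of length Δ centered at 0, and ε is independent of X. -/

import Mathlib

/-!
The quantization error `uniQuant Δ y - y` is the representative of `-y` in `(-Δ/2, Δ/2]`
modulo `Δ`. For a fixed value `x` of `X`, the reflection `t ↦ -x - t` sends the uniform law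
of the dither to the uniform law on a period interval, and reduction modulo `Δ` (a rotation
of the circle `ℝ ⧸ Δℤ`) sends that to the uniform law on `(-Δ/2, Δ/2]`. Thus the conditional
law of the error given `X = x` does not depend on `x`, and by the independence of `X` and `u`
the joint law of `(X, ε)` is the product of the law of `X` with this uniform law.
-/

open MeasureTheory

/-- The uniform quantizer with step size `Δ`, rounding to the nearest multiple of
`Δ`: `uni_Δ(y) = Δ·⌊y/Δ + 1/2⌋`. -/
noncomputable def uniQuant (Δ : ℝ) (y : ℝ) : ℝ :=
  Δ * (⌊y / Δ + 1 / 2⌋ : ℤ)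

open Set ProbabilityTheory

lemma measurable_uniQuant (Δ : ℝ) : Measurable (uniQuant Δ) := by
  unfold uniQuant
  fun_prop

lemma uniQuant_sub_self_eq_toIocMod {Δ : ℝ} (hΔ : 0 < Δ) (y : ℝ) :
    uniQuant Δ y - y = toIocMod hΔ (-(Δ / 2)) (-y) := by
  symm
  rw [toIocMod_eq_iff]
  have hy : y = Δ * (y / Δ) := by field_simp
  have hlo := mul_le_mul_of_nonneg_left (Int.floor_le (y / Δ + 1 / 2)) hΔ.le
  have hhi := mul_lt_mul_of_pos_left (Int.lt_floor_add_one (y / Δ + 1 / 2)) hΔ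
  refine ⟨⟨?_, ?_⟩, -⌊y / Δ + 1 / 2⌋, ?_⟩
  · rw [uniQuant]; linarith
  · rw [uniQuant]; linarith
  · rw [uniQuant, zsmul_eq_mul]; push_cast; ring

lemma measurePreserving_toIocMod {p : ℝ} (hp : 0 < p) (a b : ℝ) :
    MeasurePreserving (toIocMod hp a) (volume.restrict (Ioc b (b + p)))
      (volume.restrict (Ioc a (a + p))) :=
  haveI : Fact (0 < p) := ⟨hp⟩
  (measurePreserving_subtype_coe measurableSet_Ioc).comp <|
    (AddCircle.measurePreserving_equivIoc p).comp (AddCircle.measurePreserving_mk p b)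

lemma map_uniQuant_dither_error {Δ : ℝ} (hΔ : 0 < Δ) (x : ℝ) :
    (volume.restrict (Ico (-(Δ / 2)) (Δ / 2))).map (fun t => uniQuant Δ (x + t) - (x + t))
      = volume.restrict (Ioc (-(Δ / 2)) (Δ / 2)) := by
  have hreflect : (fun t => -x - t) ⁻¹' Ioc (-x - Δ / 2) (-x - Δ / 2 + Δ)
      = Ico (-(Δ / 2)) (Δ / 2) := by
    rw [preimage_const_sub_Ioc]; congr 1 <;> ring
  have h := (measurePreserving_toIocMod hΔ (-(Δ / 2)) (-x - Δ / 2)).comp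
    ((Measure.measurePreserving_sub_left volume (-x)).restrict_preimage measurableSet_Ioc)
  rw [hreflect, show -(Δ / 2) + Δ = Δ / 2 by ring] at h
  have herror : (fun t => uniQuant Δ (x + t) - (x + t)) = toIocMod hΔ (-(Δ / 2)) ∘ (-x - ·) :=
    funext fun t => by rw [Function.comp_apply, uniQuant_sub_self_eq_toIocMod hΔ, neg_add']
  rw [herror, h.map_eq]

lemma MeasureTheory.Measure.map_prodMk_uncurry_eq_prod {α β γ : Type*} [MeasurableSpace α]
    [MeasurableSpace β] [MeasurableSpace γ] (μ : Measure α) (ν : Measure β) [SFinite ν]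
    (ρ : Measure γ) [SFinite ρ] {g : α → β → γ} (hg : Measurable (Function.uncurry g))
    (h : ∀ x, ν.map (g x) = ρ) :
    (μ.prod ν).map (fun p => (p.1, g p.1 p.2)) = μ.prod ρ := by
  have hF : Measurable fun p : α × β => (p.1, g p.1 p.2) := measurable_fst.prodMk hg
  ext s hs
  rw [Measure.map_apply hF hs, Measure.prod_apply (hF hs), Measure.prod_apply hs]
  refine lintegral_congr fun x => ?_
  have hgx : Measurable (g x) := hg.comp measurable_prodMk_left
  rw [← h x, Measure.map_apply hgx (measurable_prodMk_left hs)]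
  rfl

lemma ProbabilityTheory.IndepFun.map_prodMk_uncurry_eq_prod {Ω α β γ : Type*}
    [MeasurableSpace Ω] [MeasurableSpace α] [MeasurableSpace β] [MeasurableSpace γ]
    {μ : Measure Ω} [IsFiniteMeasure μ] {X : Ω → α} {U : Ω → β} (hX : Measurable X)
    (hU : Measurable U) (hXU : IndepFun X U μ) (ρ : Measure γ) [SFinite ρ] {g : α → β → γ}
    (hg : Measurable (Function.uncurry g)) (h : ∀ x, (μ.map U).map (g x) = ρ) :
    μ.map (fun ω => (X ω, g (X ω) (U ω))) = (μ.map X).prod ρ := by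
  have hF : Measurable fun p : α × β => (p.1, g p.1 p.2) := measurable_fst.prodMk hg
  rw [← Measure.map_prodMk_uncurry_eq_prod _ _ ρ hg h,
    ← (indepFun_iff_map_prod_eq_prod_map_map hX.aemeasurable hU.aemeasurable).1 hXU,
    Measure.map_map hF (hX.prodMk hU)]
  rfl

lemma ProbabilityTheory.indepFun_and_map_eq_of_map_prodMk_eq_prod {Ω α β : Type*}
    [MeasurableSpace Ω] [MeasurableSpace α] [MeasurableSpace β]
    {μ : Measure Ω} [IsProbabilityMeasure μ] {X : Ω → α} {Y : Ω → β} (hX : Measurable X)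
    (hY : Measurable Y) {ρ : Measure β} [SFinite ρ]
    (h : μ.map (fun ω => (X ω, Y ω)) = (μ.map X).prod ρ) :
    IndepFun X Y μ ∧ μ.map Y = ρ := by
  have : IsProbabilityMeasure (μ.map X) := Measure.isProbabilityMeasure_map hX.aemeasurable
  have hlaw : μ.map Y = ρ := by
    have h_snd := congrArg (Measure.map Prod.snd) h
    rwa [Measure.map_map measurable_snd (hX.prodMk hY), Measure.map_snd_prod, measure_univ,
      one_smul] at h_snd
  refine ⟨?_, hlaw⟩
  rw [indepFun_iff_map_prod_eq_prod_map_map hX.aemeasurable hY.aemeasurable, hlaw, h]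

/-- Subtractive dithering.  Let `Δ > 0`, let `X` be a real random variable, and let
`u` be uniform on `[−Δ/2, Δ/2)` and independent of `X`.  Then the quantization
error `ε := uni_Δ(X + u) − (X + u)` is uniformly distributed on an interval of
length `Δ` centered at `0` (namely `(−Δ/2, Δ/2]`), and `ε` is independent of `X`. -/
theorem subtractive_dither_error_uniform_indep
    {Ω : Type*} [MeasurableSpace Ω] (μ : Measure Ω) [IsProbabilityMeasure μ]
    (Δ : ℝ) (hΔ : 0 < Δ)
    (X u : Ω → ℝ) (hX : Measurable X) (hu : Measurable u)
    (huni : Measure.map u μ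
      = (ENNReal.ofReal Δ)⁻¹ • volume.restrict (Set.Ico (-(Δ / 2)) (Δ / 2)))
    (hindep : ProbabilityTheory.IndepFun X u μ) :
    Measure.map (fun ω => uniQuant Δ (X ω + u ω) - (X ω + u ω)) μ
        = (ENNReal.ofReal Δ)⁻¹ • volume.restrict (Set.Ioc (-(Δ / 2)) (Δ / 2)) ∧
    ProbabilityTheory.IndepFun
      (fun ω => uniQuant Δ (X ω + u ω) - (X ω + u ω)) X μ := by
  have herror : Measurable (Function.uncurry fun x t => uniQuant Δ (x + t) - (x + t)) := by
    have := measurable_uniQuant Δ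
    unfold Function.uncurry
    fun_prop
  have hjoint := hindep.map_prodMk_uncurry_eq_prod hX hu
    ((ENNReal.ofReal Δ)⁻¹ • volume.restrict (Ioc (-(Δ / 2)) (Δ / 2))) herror fun x => by
      rw [huni, Measure.map_smul, map_uniQuant_dither_error hΔ x]
  obtain ⟨hind, hlaw⟩ :=
    indepFun_and_map_eq_of_map_prodMk_eq_prod hX (herror.comp (hX.prodMk hu)) hjoint
  exact ⟨hlaw, hind.symm⟩
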